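/- Let G be the free product of finitely many finite groups and finitely many copies of ℤ (a plain group). Then the relation ∼ on nontrivial finite-order elements of G, defined by a ∼ b iff ab has finite order, is transitive. -/

import Mathlib

/-!
In a free product `∗ᵢ Mᵢ`, a nonempty reduced word whose first and last letters lie in different
factors has infinite order, since its powers are again reduced. Peeling
letters off both ends then shows that an element of finite order is conjugate into a factor, and
that if `m * (s * p * s⁻¹)` has finite order for nontrivial letters `m ∈ Mᵢ`, `p ∈ Mⱼ`, then
`i = j` and `s ∈ Mᵢ`. So whenever `a ∼ b ∼ c`, all three lie in one conjugate of one factor,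
and transitivity of `∼` passes from the factors to the free product. Finite groups and free
groups satisfy it trivially.
-/

open Monoid

namespace Monoid.CoprodI

variable {ι : Type*} {M : ι → Type*}

namespace NeWord

section Monoid

variable [∀ i, Monoid (M i)]

theorem prod_eq_of_or_exists_eq_of_mul {i j : ι} (w : NeWord M i j) :
    (i = j ∧ ∃ a : M i, w.prod = of a) ∨
      ∃ (a : M i) (k : ι) (w' : NeWord M k j), i ≠ k ∧ w.prod = of a * w'.prod ∧
        w'.toList.length < w.toList.length := by
  induction w with
  | singleton x hx => exact .inl ⟨rfl, x, prod_singleton x hx⟩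
  | append w₁ hne w₂ ih₁ _ =>
    have hlen₁ := List.length_pos_of_ne_nil w₁.toList_ne_nil
    rcases ih₁ with ⟨rfl, a, h⟩ | ⟨a, k, w', hk, h, hlen⟩
    · exact .inr ⟨a, _, w₂, hne, by rw [append_prod, h], by simp; omega⟩
    · refine .inr ⟨a, k, w'.append hne w₂, hk, by rw [append_prod, append_prod, h, mul_assoc], ?_⟩
      simp only [toList, List.length_append]; omega

theorem prod_eq_of_or_exists_eq_mul_of {i j : ι} (w : NeWord M i j) :
    (i = j ∧ ∃ a : M j, w.prod = of a) ∨
      ∃ (a : M j) (k : ι) (w' : NeWord M i k), k ≠ j ∧ w.prod = w'.prod * of a ∧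
        w'.toList.length < w.toList.length := by
  induction w with
  | singleton x hx => exact .inl ⟨rfl, x, prod_singleton x hx⟩
  | append w₁ hne w₂ _ ih₂ =>
    have hlen₂ := List.length_pos_of_ne_nil w₂.toList_ne_nil
    rcases ih₂ with ⟨rfl, a, h⟩ | ⟨a, k, w', hk, h, hlen⟩
    · exact .inr ⟨a, _, w₁, hne, by rw [append_prod, h], by simp; omega⟩
    · refine .inr ⟨a, k, w₁.append hne w', hk, by rw [append_prod, append_prod, h, mul_assoc], ?_⟩
      simp only [toList, List.length_append]; omega

theorem prod_ne_one {i j : ι} (w : NeWord M i j) : w.prod ≠ 1 := by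
  classical
  intro h
  have : w.toWord = Word.empty := by
    rw [← Word.equiv.apply_symm_apply w.toWord]
    exact (congrArg Word.equiv h).trans (one_smul (CoprodI M) Word.empty)
  exact w.toList_ne_nil (congrArg Word.toList this)

theorem exists_prod_eq_pow {i j : ι} (w : NeWord M i j) (hij : i ≠ j) (n : ℕ) :
    ∃ w' : NeWord M i j, w'.prod = w.prod ^ (n + 1) := by
  induction n with
  | zero => exact ⟨w, (pow_one _).symm⟩
  | succ n ih =>
    obtain ⟨w', hw'⟩ := ih
    exact ⟨w.append hij.symm w', by rw [append_prod, hw', ← pow_succ']⟩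

theorem not_isOfFinOrder_prod {i j : ι} (w : NeWord M i j) (hij : i ≠ j) :
    ¬IsOfFinOrder w.prod := by
  intro h
  obtain ⟨n, hn, hpow⟩ := isOfFinOrder_iff_pow_eq_one.1 h
  obtain ⟨w', hw'⟩ := w.exists_prod_eq_pow hij (n - 1)
  exact w'.prod_ne_one (by rw [hw', Nat.sub_add_cancel hn, hpow])

end Monoid

end NeWord

theorem eq_one_or_exists_neWord_prod_eq [∀ i, Monoid (M i)] (x : CoprodI M) :
    x = 1 ∨ ∃ (i j : ι) (w : NeWord M i j), w.prod = x := by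
  classical
  by_cases hx : Word.equiv x = Word.empty
  · exact .inl (by rw [← Word.equiv.symm_apply_apply x, hx]; rfl)
  · obtain ⟨i, j, w, hw⟩ := NeWord.of_word _ hx
    exact .inr ⟨i, j, w, by rw [NeWord.prod, hw]; exact Word.equiv.symm_apply_apply x⟩

theorem exists_eq_of_mul_mul_of [∀ i, Monoid (M i)] (i j : ι) (s : CoprodI M) :
    ∃ (u : M i) (v : M j) (t : CoprodI M), s = of u * t * of v ∧
      (t = 1 ∨ ∃ (k l : ι) (w : NeWord M k l), i ≠ k ∧ l ≠ j ∧ w.prod = t) := by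
  rcases eq_one_or_exists_neWord_prod_eq s with rfl | ⟨k, l, w, rfl⟩
  · exact ⟨1, 1, 1, by simp, .inl rfl⟩
  obtain ⟨u, t, hs, ht⟩ : ∃ (u : M i) (t : CoprodI M), w.prod = of u * t ∧
      (t = 1 ∨ ∃ (k' : ι) (w' : NeWord M k' l), i ≠ k' ∧ w'.prod = t) := by
    by_cases hik : i = k
    · subst hik
      rcases w.prod_eq_of_or_exists_eq_of_mul with ⟨rfl, a, h⟩ | ⟨a, k', w', hk', h, -⟩
      · exact ⟨a, 1, by rw [h, mul_one], .inl rfl⟩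
      · exact ⟨a, _, h, .inr ⟨k', w', hk', rfl⟩⟩
    · exact ⟨1, w.prod, by rw [map_one, one_mul], .inr ⟨k, w, hik, rfl⟩⟩
  rcases ht with rfl | ⟨k', w', hk', rfl⟩
  · exact ⟨u, 1, 1, by simp [hs], .inl rfl⟩
  by_cases hlj : l = j
  · subst hlj
    rcases w'.prod_eq_of_or_exists_eq_mul_of with ⟨rfl, b, h⟩ | ⟨b, l', w'', hl', h, -⟩
    · exact ⟨u, b, 1, by rw [hs, h, mul_one], .inl rfl⟩
    · exact ⟨u, b, w''.prod, by rw [hs, h, mul_assoc], .inr ⟨k', l', w'', hk', hl', rfl⟩⟩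
  · exact ⟨u, 1, w'.prod, by rw [hs, map_one, mul_one], .inr ⟨k', l, w', hk', hlj, rfl⟩⟩

section Group

variable [∀ i, Group (M i)]

theorem eq_and_exists_eq_of_of_isOfFinOrder_of_mul_conj {i j : ι} {m : M i} {p : M j}
    (hm : m ≠ 1) (hp : p ≠ 1) {s : CoprodI M} (h : IsOfFinOrder (of m * (s * of p * s⁻¹))) :
    i = j ∧ ∃ u : M i, s = of u := by
  obtain ⟨u, v, t, rfl, ht⟩ := exists_eq_of_mul_mul_of i j s
  have hm' : u⁻¹ * m * u ≠ 1 := by simpa [mul_assoc, inv_mul_eq_one] using hm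
  have hp' : v * p * v⁻¹ ≠ 1 := by rwa [Ne, mul_inv_eq_one, mul_eq_left]
  have h' : IsOfFinOrder (of (u⁻¹ * m * u) * t * of (v * p * v⁻¹) * t⁻¹) := by
    refine (isConj_iff.2 ⟨of u⁻¹, ?_⟩).isOfFinOrder h
    simp only [map_mul, map_inv]
    group
  rcases ht with rfl | ⟨k, l, w, hik, hlj, rfl⟩
  · by_cases hij : i = j
    · subst hij
      exact ⟨rfl, u * v, by rw [mul_one, map_mul]⟩
    · refine absurd ?_ (((NeWord.singleton _ hm').append hij
        (NeWord.singleton _ hp')).not_isOfFinOrder_prod hij)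
      simpa [NeWord.append_prod, NeWord.prod_singleton] using h'
  · refine absurd ?_ (((((NeWord.singleton _ hm').append hik w).append hlj
      (NeWord.singleton _ hp')).append hlj.symm w.inv).not_isOfFinOrder_prod hik)
    simpa [NeWord.append_prod, NeWord.prod_singleton, NeWord.inv_prod] using h'

theorem NeWord.exists_prod_eq_conj_of {i j : ι} (w : NeWord M i j) (hw : IsOfFinOrder w.prod) :
    ∃ (g : CoprodI M) (k : ι) (m : M k), w.prod = g * of m * g⁻¹ := by
  induction hn : w.toList.length using Nat.strong_induction_on generalizing i j with
  | _ n ih =>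
  obtain rfl : i = j := by_contra fun hij => w.not_isOfFinOrder_prod hij hw
  rcases w.prod_eq_of_or_exists_eq_of_mul with ⟨-, a, h⟩ | ⟨a, k, w', hik, h, hlen⟩
  · exact ⟨1, i, a, by rw [h, one_mul, inv_one, mul_one]⟩
  rcases w'.prod_eq_of_or_exists_eq_mul_of with ⟨rfl, -, -⟩ | ⟨b, l, w'', hl, h', hlen'⟩
  · exact absurd rfl hik
  -- conjugating by the first letter merges it into the last one
  have hconj : w.prod = of a * (w''.prod * of (b * a)) * (of a)⁻¹ := by
    rw [h, h', map_mul]; group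
  have hord : IsOfFinOrder (w''.prod * of (b * a)) :=
    (isConj_iff.2 ⟨(of a)⁻¹, by rw [hconj]; group⟩).isOfFinOrder hw
  by_cases hba : b * a = 1
  · rw [hba, map_one, mul_one] at hconj hord
    obtain ⟨g, k, m, hg⟩ := ih _ (by omega) w'' hord rfl
    exact ⟨of a * g, k, m, by rw [hconj, hg]; group⟩
  · refine absurd ?_ ((w''.append hl (NeWord.singleton _ hba)).not_isOfFinOrder_prod hik.symm)
    simpa [NeWord.append_prod, NeWord.prod_singleton] using hord

theorem exists_eq_conj_of_of_isOfFinOrder {x : CoprodI M} (hx₁ : x ≠ 1) (hx : IsOfFinOrder x) :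
    ∃ (g : CoprodI M) (i : ι) (m : M i), x = g * of m * g⁻¹ := by
  rcases eq_one_or_exists_neWord_prod_eq x with rfl | ⟨i, j, w, rfl⟩
  · exact absurd rfl hx₁
  · exact w.exists_prod_eq_conj_of hx

end Group

end Monoid.CoprodI

universe u v

/-- `Monoid.Coprod M N` as the free product of a `Bool`-indexed family, lifted to a common
universe. -/
def Monoid.Coprod.liftedFactors (M : Type u) (N : Type v) : Bool → Type max u v
  | true => ULift.{v} M
  | false => ULift.{u} N

instance (M : Type u) (N : Type v) [Group M] [Group N] :
    ∀ b, Group (Coprod.liftedFactors M N b)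
  | true => inferInstanceAs (Group (ULift M))
  | false => inferInstanceAs (Group (ULift N))

def IsOfFinOrderMulTransitive (G : Type*) [Group G] : Prop :=
  ∀ a b c : G, a ≠ 1 → b ≠ 1 → c ≠ 1 → IsOfFinOrder a → IsOfFinOrder b → IsOfFinOrder c →
    IsOfFinOrder (a * b) → IsOfFinOrder (b * c) → IsOfFinOrder (a * c)

namespace IsOfFinOrderMulTransitive

variable {G K : Type*} [Group G] [Group K]

theorem of_isMulTorsion (hG : IsMulTorsion G) : IsOfFinOrderMulTransitive G :=
  fun a _ c _ _ _ _ _ _ _ _ => hG (a * c)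

theorem of_isMulTorsionFree [IsMulTorsionFree G] : IsOfFinOrderMulTransitive G :=
  fun a _ _ ha _ _ hoa _ _ _ _ => absurd ((isOfFinOrder_iff_eq_one a).1 hoa) ha

theorem of_injective {f : G →* K} (hf : Function.Injective f) (hK : IsOfFinOrderMulTransitive K) :
    IsOfFinOrderMulTransitive G := by
  intro a b c ha hb hc hoa hob hoc hab hbc
  simp only [← hf.isOfFinOrder_iff, map_mul] at hoa hob hoc hab hbc ⊢
  exact hK _ _ _ ((map_ne_one_iff f hf).2 ha) ((map_ne_one_iff f hf).2 hb)
    ((map_ne_one_iff f hf).2 hc) hoa hob hoc hab hbc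

open CoprodI in
theorem coprodI {ι : Type*} {M : ι → Type*} [∀ i, Group (M i)]
    (hM : ∀ i, IsOfFinOrderMulTransitive (M i)) : IsOfFinOrderMulTransitive (CoprodI M) := by
  intro a b c ha hb hc hoa hob hoc hab hbc
  obtain ⟨g, i, m, rfl⟩ := exists_eq_conj_of_of_isOfFinOrder ha hoa
  obtain ⟨g', j, n, rfl⟩ := exists_eq_conj_of_of_isOfFinOrder hb hob
  obtain ⟨g'', l, p, rfl⟩ := exists_eq_conj_of_of_isOfFinOrder hc hoc
  have hm : m ≠ 1 := by rintro rfl; simp at ha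
  have hn : n ≠ 1 := by rintro rfl; simp at hb
  have hp : p ≠ 1 := by rintro rfl; simp at hc
  obtain ⟨rfl, u, hu⟩ := eq_and_exists_eq_of_of_isOfFinOrder_of_mul_conj hm hn (s := g⁻¹ * g')
    ((isConj_iff.2 ⟨g⁻¹, by group⟩).isOfFinOrder hab)
  obtain ⟨rfl, v, hv⟩ := eq_and_exists_eq_of_of_isOfFinOrder_of_mul_conj hn hp (s := g'⁻¹ * g'')
    ((isConj_iff.2 ⟨g'⁻¹, by group⟩).isOfFinOrder hbc)
  obtain rfl : g' = g * of u := by rw [← hu]; group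
  obtain rfl : g'' = g * of (u * v) := by rw [map_mul, ← hv]; group
  have hconj (x : M i) : IsOfFinOrder (g * of x * g⁻¹) ↔ IsOfFinOrder x := by
    rw [← (CoprodI.of_injective i).isOfFinOrder_iff]
    exact ⟨(isConj_iff.2 ⟨g⁻¹, by group⟩).isOfFinOrder, (isConj_iff.2 ⟨g, rfl⟩).isOfFinOrder⟩
  have hne (x : M i) : g * of x * g⁻¹ ≠ 1 ↔ x ≠ 1 := by
    simpa using map_ne_one_iff _ (CoprodI.of_injective i)
  have hlift (z x : M i) : g * of z * of x * (g * of z)⁻¹ = g * of (z * x * z⁻¹) * g⁻¹ := by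
    simp only [map_mul, map_inv]; group
  have hmul (x y : M i) : g * of x * g⁻¹ * (g * of y * g⁻¹) = g * of (x * y) * g⁻¹ := by
    simp only [map_mul]; group
  simp only [hlift, hmul, hconj, hne] at ha hb hc hoa hob hoc hab hbc ⊢
  exact hM i _ _ _ ha hb hc hoa hob hoc hab hbc

theorem coprod {M : Type u} {N : Type v} [Group M] [Group N] (hM : IsOfFinOrderMulTransitive M)
    (hN : IsOfFinOrderMulTransitive N) : IsOfFinOrderMulTransitive (Coprod M N) := by
  let φ : Coprod M N →* CoprodI (Coprod.liftedFactors M N) :=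
    Coprod.lift ((CoprodI.of (i := true)).comp MulEquiv.ulift.symm.toMonoidHom)
      ((CoprodI.of (i := false)).comp MulEquiv.ulift.symm.toMonoidHom)
  let ψ : CoprodI (Coprod.liftedFactors M N) →* Coprod M N := CoprodI.lift fun
    | true => Coprod.inl.comp MulEquiv.ulift.toMonoidHom
    | false => Coprod.inr.comp MulEquiv.ulift.toMonoidHom
  have hψφ : ψ.comp φ = MonoidHom.id _ := by
    apply Coprod.hom_ext <;> ext <;> rfl
  refine of_injective (Function.LeftInverse.injective (g := ψ) (DFunLike.congr_fun hψφ)) ?_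
  exact coprodI fun
    | true => of_injective (f := (MulEquiv.ulift : ULift.{v} M ≃* M).toMonoidHom)
        MulEquiv.ulift.injective hM
    | false => of_injective (f := (MulEquiv.ulift : ULift.{u} N ≃* N).toMonoidHom)
        MulEquiv.ulift.injective hN

end IsOfFinOrderMulTransitive

/-- In a plain group (a free product of finitely many finite groups and a free
group of finite rank), the relation `a ∼ b ↔ IsOfFinOrder (a * b)` is transitive
on nontrivial finite-order elements. -/
theorem plain_group_sim_transitive {k q : ℕ} (H : Fin k → Type*)
    [∀ i, Group (H i)] [∀ i, Finite (H i)] :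
    ∀ a b c : Coprod (CoprodI H) (FreeGroup (Fin q)),
      a ≠ 1 → b ≠ 1 → c ≠ 1 →
      IsOfFinOrder a → IsOfFinOrder b → IsOfFinOrder c →
      IsOfFinOrder (a * b) → IsOfFinOrder (b * c) → IsOfFinOrder (a * c) :=
  IsOfFinOrderMulTransitive.coprod
    (.coprodI fun _ => .of_isMulTorsion isMulTorsion_of_finite) .of_isMulTorsionFree
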